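/- Let G be a connected graph on n₀ vertices with a triangle-factor and exactly (4/3)·n₀ − 1 edges. Then every vertex of G lies in exactly one triangle of G. -/

import Mathlib

/-!
Delete one side from each triangle of the factor `P`. The deleted side is bridged by the two
remaining sides of its triangle, so the graph `S` that is left is still connected, and it has
`(4n/3 - 1) - n/3 = n - 1` edges: `S` is a spanning tree. Every edge of `G` outside `S` is the
deleted side of a triangle of `P`. Hence a triangle of `G` that is not in `P` either lies in `S`
or, together with the triangle of `P` through its deleted side, gives two distinct paths of
length two in `S` between the same two vertices; both are impossible in a tree.
-/

open SimpleGraph Finset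

def IsTriangleFactor {V : Type*} [DecidableEq V] (G : SimpleGraph V) (P : Finset (Finset V)) : Prop :=
  (∀ t ∈ P, G.IsNClique 3 t) ∧ (∀ v : V, ∃! t, t ∈ P ∧ v ∈ t)

namespace SimpleGraph

variable {V : Type*}

theorem Connected.of_forall_adj_reachable {G H : SimpleGraph V} (hG : G.Connected)
    (h : ∀ ⦃u v⦄, G.Adj u v → H.Reachable u v) : H.Connected := by
  rw [connected_iff] at hG ⊢
  refine ⟨fun u v => ?_, hG.2⟩
  rw [reachable_iff_reflTransGen] at *
  exact ((reachable_iff_reflTransGen _ _).1 (hG.1 u v)).lift' id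
    fun a b hab => (reachable_iff_reflTransGen a b).1 (h hab)

theorem IsAcyclic.eq_of_adj_of_adj {S : SimpleGraph V} (hS : S.IsAcyclic) {x y w z : V}
    (hxz : x ≠ z) (hxw : S.Adj x w) (hwz : S.Adj w z) (hxy : S.Adj x y) (hyz : S.Adj y z) :
    w = y := by
  have hpath {m : V} (h₁ : S.Adj x m) (h₂ : S.Adj m z) : (Walk.cons h₁ (.cons h₂ .nil)).IsPath := by
    simp [h₁.ne, h₂.ne, hxz]
  simpa using congrArg (fun p : S.Path x z => p.1.getVert 1)
    ((hS.subsingleton_path x z).elim ⟨_, hpath hxw hwz⟩ ⟨_, hpath hxy hyz⟩)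

end SimpleGraph

namespace IsTriangleFactor

variable {V : Type*} [DecidableEq V] {G : SimpleGraph V} {P : Finset (Finset V)}

theorem eq_of_mem (hP : IsTriangleFactor G P) {T T' : Finset V} (hT : T ∈ P) (hT' : T' ∈ P)
    {v : V} (hv : v ∈ T) (hv' : v ∈ T') : T = T' :=
  (hP.2 v).unique ⟨hT, hv⟩ ⟨hT', hv'⟩

theorem card_eq_three_mul [Fintype V] (hP : IsTriangleFactor G P) : Fintype.card V = 3 * #P := by
  have hsum : ∑ T ∈ P, #T = Fintype.card V * 1 :=
    sum_card fun v => card_eq_one_iff_existsUnique.2 (by simpa only [mem_filter] using hP.2 v)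
  rw [sum_congr rfl fun T hT => (hP.1 T hT).card_eq, sum_const, smul_eq_mul] at hsum
  omega

theorem exists_mem_of_isAcyclic (hP : IsTriangleFactor G P) {S : SimpleGraph V}
    (hS : S.IsAcyclic)
    (hSG : ∀ ⦃u v⦄, G.Adj u v → ¬S.Adj u v → ∃ w, S.Adj u w ∧ S.Adj w v ∧ {u, w, v} ∈ P)
    {x y z : V} (hxy : G.Adj x y) (hxz : G.Adj x z) (hyz : G.Adj y z) :
    ∃ T ∈ P, x ∈ T ∧ y ∈ T ∧ z ∈ T := by
  have hside : ∀ ⦃x y z⦄, G.Adj x y → G.Adj x z → G.Adj y z → ¬S.Adj x z →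
      ∃ T ∈ P, x ∈ T ∧ y ∈ T ∧ z ∈ T := by
    intro x y z hxy hxz hyz hxzS
    obtain ⟨w, hxw, hwz, hT⟩ := hSG hxz hxzS
    by_cases hy : y ∈ ({x, w, z} : Finset V)
    · exact ⟨_, hT, by simp, hy, by simp⟩
    -- an edge `u y` missing from `S` would put `y` into the triangle of `P` through `u`
    have hSy {u : V} (hu : u ∈ ({x, w, z} : Finset V)) (huy : G.Adj u y) : S.Adj u y := by
      by_contra huy'
      obtain ⟨w', -, -, hT'⟩ := hSG huy huy'
      exact hy (hP.eq_of_mem hT' hT (by simp) hu ▸ by simp)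
    have hwy := hS.eq_of_adj_of_adj hxz.ne hxw hwz (hSy (by simp) hxy) (hSy (by simp) hyz.symm).symm
    simp [hwy] at hy
  by_cases hSxz : S.Adj x z
  · by_cases hSxy : S.Adj x y
    · by_cases hSyz : S.Adj y z
      · exact absurd (is3Clique_triple_iff.2 ⟨hSxy, hSxz, hSyz⟩) (hS.cliqueFree le_rfl _)
      · obtain ⟨T, hT, hy, hx, hz⟩ := hside hxy.symm hyz hxz hSyz
        exact ⟨T, hT, hx, hy, hz⟩
    · obtain ⟨T, hT, hx, hz, hy⟩ := hside hxz hxy hyz.symm hSxy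
      exact ⟨T, hT, hx, hy, hz⟩
  · exact hside hxy hxz hyz hSxz

theorem mem_of_isNClique_of_isAcyclic (hP : IsTriangleFactor G P) {S : SimpleGraph V}
    (hS : S.IsAcyclic)
    (hSG : ∀ ⦃u v⦄, G.Adj u v → ¬S.Adj u v → ∃ w, S.Adj u w ∧ S.Adj w v ∧ {u, w, v} ∈ P)
    {t : Finset V} (ht : G.IsNClique 3 t) : t ∈ P := by
  obtain ⟨x, y, z, hxy, hxz, hyz, rfl⟩ := is3Clique_iff.1 ht
  obtain ⟨T, hT, hx, hy, hz⟩ := hP.exists_mem_of_isAcyclic hS hSG hxy hxz hyz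
  have hsub : {x, y, z} ⊆ T := by simp [insert_subset_iff, hx, hy, hz]
  rwa [eq_of_subset_of_card_le hsub (by rw [(hP.1 T hT).card_eq, ht.card_eq])]

variable [Fintype V] [DecidableRel G.Adj]

theorem exists_deleteEdges_one_side_each [Nonempty V] (hP : IsTriangleFactor G P) :
    ∃ D : Finset (Sym2 V), D ⊆ G.edgeFinset ∧ #D = #P ∧ ∀ ⦃u v⦄, s(u, v) ∈ D →
      ∃ w, (G.deleteEdges D).Adj u w ∧ (G.deleteEdges D).Adj w v ∧ {u, w, v} ∈ P := by
  choose! a b c hab hac hbc hT using fun T hT => is3Clique_iff.1 (hP.1 T hT)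
  have hmem {T : Finset V} (h : T ∈ P) : a T ∈ T ∧ b T ∈ T ∧ c T ∈ T := by
    have h3 : a T ∈ ({a T, b T, c T} : Finset V) ∧ b T ∈ ({a T, b T, c T} : Finset V) ∧
        c T ∈ ({a T, b T, c T} : Finset V) := by simp
    rwa [← hT T h] at h3
  set D := P.image fun T => s(a T, c T)
  have hD {T : Finset V} (h : T ∈ P) {x y : V} (hx : x ∈ T) (hy : y ∈ T) (hxy : s(x, y) ∈ D) :
      s(x, y) = s(a T, c T) := by
    obtain ⟨T', hT', he⟩ := mem_image.1 hxy
    have hxT' : x ∈ T' ∧ y ∈ T' := by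
      rcases Sym2.eq_iff.1 he with ⟨rfl, rfl⟩ | ⟨rfl, rfl⟩ <;> simp [hmem hT']
    rw [← he, hP.eq_of_mem hT' h hxT'.1 hx]
  refine ⟨D, image_subset_iff.2 fun T h => mem_edgeFinset.2 (hac T h), ?_, ?_⟩
  · refine card_image_of_injOn fun T h T' h' he => ?_
    have : a T ∈ T' := by
      rcases Sym2.eq_iff.1 he with ⟨he, -⟩ | ⟨he, -⟩ <;> simp [he, hmem h']
    exact hP.eq_of_mem h h' (hmem h).1 this
  · intro u v huv
    obtain ⟨T, h, he⟩ := mem_image.1 huv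
    have hkeep {x y : V} (hx : x ∈ T) (hy : y ∈ T) (hxy : G.Adj x y)
        (hne : s(x, y) ≠ s(a T, c T)) : (G.deleteEdges D).Adj x y :=
      deleteEdges_adj.2 ⟨hxy, fun hD' => hne (hD h hx hy hD')⟩
    have hab' : (G.deleteEdges D).Adj (a T) (b T) :=
      hkeep (hmem h).1 (hmem h).2.1 (hab T h) (by simp [(hac T h).ne, (hbc T h).ne])
    have hbc' : (G.deleteEdges D).Adj (b T) (c T) :=
      hkeep (hmem h).2.1 (hmem h).2.2 (hbc T h) (by simp [(hab T h).ne', (hac T h).ne'])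
    have hT' : {a T, b T, c T} ∈ P := hT T h ▸ h
    rcases Sym2.eq_iff.1 he with ⟨rfl, rfl⟩ | ⟨rfl, rfl⟩
    · exact ⟨b T, hab', hbc', hT'⟩
    · refine ⟨b T, hbc'.symm, hab'.symm, ?_⟩
      rwa [insert_comm, pair_comm, insert_comm]

theorem exists_isAcyclic_of_connected (hP : IsTriangleFactor G P) (hconn : G.Connected)
    (hE : 3 * #G.edgeFinset + 3 = 4 * Fintype.card V) :
    ∃ S : SimpleGraph V, S.IsAcyclic ∧
      ∀ ⦃u v⦄, G.Adj u v → ¬S.Adj u v → ∃ w, S.Adj u w ∧ S.Adj w v ∧ {u, w, v} ∈ P := by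
  have := hconn.nonempty
  obtain ⟨D, hDE, hDcard, hD⟩ := hP.exists_deleteEdges_one_side_each
  set S := G.deleteEdges D
  have hSG : ∀ ⦃u v⦄, G.Adj u v → ¬S.Adj u v → ∃ w, S.Adj u w ∧ S.Adj w v ∧ {u, w, v} ∈ P :=
    fun u v huv hS => hD (by simpa [S, huv] using hS)
  have hSconn : S.Connected := hconn.of_forall_adj_reachable fun u v huv => by
    by_cases h : S.Adj u v
    · exact h.reachable
    · obtain ⟨w, huw, hwv, -⟩ := hSG huv h
      exact huw.reachable.trans hwv.reachable
  have hScard : Nat.card S.edgeSet + 1 = Nat.card V := by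
    rw [Nat.card_eq_fintype_card, ← edgeFinset_card, edgeFinset_deleteEdges,
      card_sdiff_of_subset hDE, Nat.card_eq_fintype_card]
    have := hP.card_eq_three_mul
    omega
  exact ⟨S, (isTree_iff_connected_and_card.2 ⟨hSconn, hScard⟩).isAcyclic, hSG⟩

end IsTriangleFactor

theorem stmt11 {V : Type*} [Fintype V] [DecidableEq V] (G : SimpleGraph V) [DecidableRel G.Adj]
    (n₀ : ℕ) (hn : Fintype.card V = n₀) (hconn : G.Connected)
    (P : Finset (Finset V)) (hP : IsTriangleFactor G P)
    (hE : 3 * G.edgeFinset.card + 3 = 4 * n₀) :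
    ∀ v : V, ∃! t : Finset V, G.IsNClique 3 t ∧ v ∈ t := by
  subst hn
  obtain ⟨S, hS, hSG⟩ := hP.exists_isAcyclic_of_connected hconn hE
  intro v
  obtain ⟨T, ⟨hT, hvT⟩, -⟩ := hP.2 v
  exact ⟨T, ⟨hP.1 T hT, hvT⟩, fun t ⟨ht, hvt⟩ =>
    hP.eq_of_mem (hP.mem_of_isNClique_of_isAcyclic hS hSG ht) hT hvt hvT⟩
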